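/- arXiv:2010.00429 — 2 statements merged into one kernel-verified Lean document; each statement's English description precedes it below -/
import Mathlib

section
/- Let Δ ≥ 1 and let G be a Δ-regular bipartite finite simple graph with at least one vertex. Then the injective chromatic index of G satisfies χ'_inj(G) ≥ Δ. -/
open SimpleGraph

/-- Two distinct edges of `G` *conflict* if they are at distance exactly 1 in `G`
(they share no endpoint but some endpoint of one is adjacent to some endpoint of the
other), or they lie in a common triangle of `G`. -/
def EdgeConflict {V : Type*} (G : SimpleGraph V) (e₁ e₂ : Sym2 V) : Prop :=
  e₁ ≠ e₂ ∧
    (((∀ u ∈ e₁, u ∉ e₂) ∧ ∃ u ∈ e₁, ∃ v ∈ e₂, G.Adj u v) ∨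
      (∃ a b c : V, G.Adj a b ∧ G.Adj b c ∧ G.Adj a c ∧
        e₁ ∈ ({s(a, b), s(b, c), s(a, c)} : Set (Sym2 V)) ∧
        e₂ ∈ ({s(a, b), s(b, c), s(a, c)} : Set (Sym2 V))))

/-- An injective edge-coloring of `G` with `k` colors. -/
def IsInjEdgeColoring {V : Type*} (G : SimpleGraph V) {k : ℕ} (f : Sym2 V → Fin k) : Prop :=
  ∀ e₁ ∈ G.edgeSet, ∀ e₂ ∈ G.edgeSet, EdgeConflict G e₁ e₂ → f e₁ ≠ f e₂

/-- The injective chromatic index of `G`. -/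
noncomputable def injChromIndex {V : Type*} (G : SimpleGraph V) : ℕ :=
  sInf {k : ℕ | ∃ f : Sym2 V → Fin k, IsInjEdgeColoring G f}


/-- `G` is bipartite: its vertices split into two sides such that every edge joins
the two sides. -/
def IsBipartiteGraph {V : Type*} (G : SimpleGraph V) : Prop :=
  ∃ A : Set V, ∀ ⦃u v : V⦄, G.Adj u v → (u ∈ A ↔ v ∉ A)

/-!
A colour class `S` of an injective edge-colouring of a triangle-free graph is a disjoint union
of stars, so every edge of `S` has an endpoint lying on no other edge of `S`. Choosing one such
private endpoint per edge gives an independent set of size `|S|`, and in a `Δ`-regular graph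
with `Δ ≥ 1` an independent set has at most `|V|/2` vertices. Hence `Δ|V| = 2|E| ≤ k|V|` for an
injective edge-colouring with `k` colours.
-/

open Finset

section

variable {V : Type*} {G : SimpleGraph V}

theorem IsBipartiteGraph.cliqueFree_three (hG : IsBipartiteGraph G) : G.CliqueFree 3 := by
  classical
  obtain ⟨A, hA⟩ := hG
  let C : G.Coloring Bool := Coloring.mk (fun v ↦ decide (v ∈ A)) fun {u v} huv ↦ by
    have := hA huv
    by_cases hu : u ∈ A <;> simp_all
  exact C.colorable.cliqueFree (by simp)

def IsConflictFree (G : SimpleGraph V) (S : Set (Sym2 V)) : Prop :=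
  ∀ e₁ ∈ S, ∀ e₂ ∈ S, ¬EdgeConflict G e₁ e₂

theorem IsInjEdgeColoring.isConflictFree_fiber {k : ℕ} {f : Sym2 V → Fin k}
    (hf : IsInjEdgeColoring G f) (c : Fin k) : IsConflictFree G {e ∈ G.edgeSet | f e = c} :=
  fun _ he₁ _ he₂ hconf ↦ hf _ he₁.1 _ he₂.1 hconf (he₁.2.trans he₂.2.symm)

theorem le_injChromIndex [Finite V] {n : ℕ}
    (h : ∀ k (f : Sym2 V → Fin k), IsInjEdgeColoring G f → n ≤ k) : n ≤ injChromIndex G := by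
  obtain ⟨m, ⟨σ⟩⟩ := Finite.exists_equiv_fin (Sym2 V)
  exact le_csInf ⟨m, σ, fun _ _ _ _ hconf h ↦ hconf.1 (σ.injective h)⟩
    fun k ⟨f, hf⟩ ↦ h k f hf

theorem eq_or_eq_of_not_edgeConflict (h3 : G.CliqueFree 3) {u v x y : V} (hux : G.Adj u x)
    (hvy : G.Adj v y) (huv : G.Adj u v) (hnc : ¬EdgeConflict G s(u, x) s(v, y)) :
    x = v ∨ y = u := by
  classical
  by_contra! hne
  have hxy : x ≠ y := by
    rintro rfl
    exact h3 {u, v, x} (is3Clique_triple_iff.2 ⟨huv, hux, hvy⟩)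
  have hdisj : ∀ w ∈ s(u, x), w ∉ s(v, y) := by
    simp only [Sym2.mem_iff]
    rintro w (rfl | rfl) <;> push Not
    exacts [⟨huv.ne, hne.2.symm⟩, ⟨hne.1, hxy⟩]
  have hne' : s(u, x) ≠ s(v, y) := fun h ↦ hdisj u (by simp) (h ▸ by simp)
  exact hnc ⟨hne', Or.inl ⟨hdisj, u, by simp, v, by simp, huv⟩⟩

theorem IsConflictFree.exists_private_mem (h3 : G.CliqueFree 3) {S : Set (Sym2 V)}
    (hSE : S ⊆ G.edgeSet) (hS : IsConflictFree G S) {e : Sym2 V} (he : e ∈ S) :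
    ∃ v ∈ e, ∀ e' ∈ S, v ∈ e' → e' = e := by
  induction e using Sym2.ind with | h x y => ?_
  by_contra! h
  obtain ⟨e₁, he₁, hxe₁, hne₁⟩ := h x (by simp)
  obtain ⟨e₂, he₂, hye₂, hne₂⟩ := h y (by simp)
  obtain ⟨z, rfl⟩ := Sym2.mem_iff_exists.1 hxe₁
  obtain ⟨w, rfl⟩ := Sym2.mem_iff_exists.1 hye₂
  rcases eq_or_eq_of_not_edgeConflict h3 (hSE he₁) (hSE he₂) (hSE he) (hS _ he₁ _ he₂)
    with rfl | rfl
  exacts [hne₁ rfl, hne₂ Sym2.eq_swap]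

theorem IsConflictFree.exists_injective_isIndepSet_range (h3 : G.CliqueFree 3)
    {S : Set (Sym2 V)} (hSE : S ⊆ G.edgeSet) (hS : IsConflictFree G S) :
    ∃ φ : S → V, Function.Injective φ ∧ G.IsIndepSet (Set.range φ) := by
  choose φ hmem hpriv using fun e : S ↦ hS.exists_private_mem h3 hSE e.2
  refine ⟨φ, fun e₁ e₂ h ↦ Subtype.ext (hpriv e₂ e₁ e₁.2 (h ▸ hmem e₁)), ?_⟩
  rintro _ ⟨e₁, rfl⟩ _ ⟨e₂, rfl⟩ hφ hadj
  have hne : e₁.1 ≠ e₂.1 := fun h ↦ hφ (congrArg φ (Subtype.ext h))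
  obtain ⟨x, hx⟩ := Sym2.mem_iff_exists.1 (hmem e₁)
  obtain ⟨y, hy⟩ := Sym2.mem_iff_exists.1 (hmem e₂)
  have hnc := hS _ e₁.2 _ e₂.2
  have hux : G.Adj (φ e₁) x := by simpa [hx] using hSE e₁.2
  have hvy : G.Adj (φ e₂) y := by simpa [hy] using hSE e₂.2
  rw [hx, hy] at hnc
  rcases eq_or_eq_of_not_edgeConflict h3 hux hvy hadj hnc with h | h
  · have : φ e₂ ∈ e₁.1 := by rw [hx, h]; exact Sym2.mem_mk_right _ _
    exact hne (hpriv e₂ e₁ e₁.2 this)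
  · have : φ e₁ ∈ e₂.1 := by rw [hy, h]; exact Sym2.mem_mk_right _ _
    exact hne (hpriv e₁ e₂ e₂.2 this).symm

variable [Fintype V] [DecidableRel G.Adj] {Δ : ℕ}

namespace SimpleGraph

theorem IsRegularOfDegree.two_mul_card_le_of_isIndepSet (hreg : G.IsRegularOfDegree Δ)
    (hΔ : 0 < Δ) {I : Finset V} (hI : G.IsIndepSet I) : 2 * #I ≤ Fintype.card V := by
  classical
  have hcount : #I * Δ ≤ #Iᶜ * Δ := by
    refine card_mul_le_card_mul G.Adj (fun a ha ↦ ?_) (fun b _ ↦ ?_)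
    · rw [← hreg.degree_eq a, ← card_neighborFinset_eq_degree]
      refine card_le_card fun b hb ↦ mem_filter.2 ⟨mem_compl.2 fun hbI ↦ ?_, ?_⟩
      · exact hI ha hbI (G.ne_of_adj ((mem_neighborFinset _ _ _).1 hb))
          ((mem_neighborFinset _ _ _).1 hb)
      · exact (mem_neighborFinset _ _ _).1 hb
    · rw [← hreg.degree_eq b, ← card_neighborFinset_eq_degree]
      exact card_le_card fun a ha ↦ (mem_neighborFinset _ _ _).2 (mem_filter.1 ha).2.symm
  have := Nat.le_of_mul_le_mul_right hcount hΔ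
  rw [card_compl] at this
  omega

theorem IsRegularOfDegree.two_mul_card_edgeFinset (hreg : G.IsRegularOfDegree Δ) :
    2 * #G.edgeFinset = Δ * Fintype.card V := by
  simp [← sum_degrees_eq_twice_card_edges, hreg.degree_eq, mul_comm]

end SimpleGraph

theorem IsConflictFree.two_mul_card_le (hreg : G.IsRegularOfDegree Δ) (hΔ : 0 < Δ)
    (h3 : G.CliqueFree 3) {S : Finset (Sym2 V)} (hSE : ↑S ⊆ G.edgeSet)
    (hS : IsConflictFree G S) : 2 * #S ≤ Fintype.card V := by
  classical
  obtain ⟨φ, hinj, hind⟩ := hS.exists_injective_isIndepSet_range h3 hSE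
  calc 2 * #S = 2 * #(univ.image φ) := by
        rw [card_image_of_injective _ hinj, card_univ]; simp
    _ ≤ Fintype.card V :=
        hreg.two_mul_card_le_of_isIndepSet hΔ (by rwa [coe_image, coe_univ, Set.image_univ])

theorem IsInjEdgeColoring.two_mul_card_edgeFinset_le {k : ℕ} {f : Sym2 V → Fin k}
    (hf : IsInjEdgeColoring G f) (hreg : G.IsRegularOfDegree Δ) (hΔ : 0 < Δ)
    (h3 : G.CliqueFree 3) : 2 * #G.edgeFinset ≤ k * Fintype.card V := by
  classical
  have hclass (c : Fin k) : 2 * #{e ∈ G.edgeFinset | f e = c} ≤ Fintype.card V :=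
    IsConflictFree.two_mul_card_le hreg hΔ h3 (fun e he ↦ mem_edgeFinset.1 (mem_filter.1 he).1)
      (by simpa using hf.isConflictFree_fiber c)
  calc 2 * #G.edgeFinset = ∑ c : Fin k, 2 * #{e ∈ G.edgeFinset | f e = c} := by
        rw [← mul_sum, card_eq_sum_card_fiberwise fun e _ ↦ mem_univ (f e)]
    _ ≤ ∑ _c : Fin k, Fintype.card V := sum_le_sum fun c _ ↦ hclass c
    _ = k * Fintype.card V := by simp

end

/-- Every `Δ`-regular bipartite graph (`Δ ≥ 1`) with at least one vertex has injective
chromatic index at least `Δ`. -/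
theorem regular_bipartite_injChromIndex_ge {V : Type*} [Fintype V] [Nonempty V]
    (G : SimpleGraph V) [DecidableRel G.Adj] (Δ : ℕ) (hΔ : 1 ≤ Δ)
    (hreg : G.IsRegularOfDegree Δ) (hbip : IsBipartiteGraph G) :
    Δ ≤ injChromIndex G := by
  refine le_injChromIndex fun k f hf ↦ Nat.le_of_mul_le_mul_right ?_ (Fintype.card_pos (α := V))
  rw [← hreg.two_mul_card_edgeFinset]
  exact hf.two_mul_card_edgeFinset_le hreg hΔ hbip.cliqueFree_three
end

section
/- Let H be a subcubic finite simple graph containing four distinct vertices a, b, c, d such that ab, bc, cd, da, ac are edges of H and bd is not an edge of H (i.e., a copy of K₄ minus an edge, with a and c the vertices of degree 3 in the copy). If H − {a,c} admits an injective edge-coloring with 7 colors, then H admits an injective edge-coloring with 7 colors. -/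
/-!
Since `a` and `c` have degree 3, the edges of `H` meeting them are the five edges of the diamond
`K₄ - bd`; colour these greedily. As `b` and `d` have at most one neighbour outside the diamond,
an edge of `H - {a, c}` in conflict with a side edge such as `ab` is the outer edge at `d` or one
of the at most two further edges at the outer neighbour of `b` (at most 3 colours), and one in
conflict with `ac` is an outer edge at `b` or `d` (at most 2 colours). Since `bd` is not an edge,
the only distinct pairs of diamond edges not in conflict are `ab, ad` and `cb, cd`. So colour
`cb`, `cd` (3 forbidden colours each), then `ac` (at most 2 + 2), then `ab` and `ad`
(at most 3 + 3): 7 colours suffice.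
-/

open SimpleGraph

section

variable {V : Type*} {G : SimpleGraph V}

theorem EdgeConflict.symm {e₁ e₂ : Sym2 V} (h : EdgeConflict G e₁ e₂) : EdgeConflict G e₂ e₁ := by
  obtain ⟨hne, ⟨hdisj, u, hu, v, hv, huv⟩ | ⟨p, q, t, hpq, hqt, hpt, h₁, h₂⟩⟩ := h
  · exact ⟨hne.symm, .inl ⟨fun x hx₂ hx₁ => hdisj x hx₁ hx₂, v, hv, u, hu, huv.symm⟩⟩
  · exact ⟨hne.symm, .inr ⟨p, q, t, hpq, hqt, hpt, h₂, h₁⟩⟩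

theorem edgeConflict_mk_iff {x y : V} {e : Sym2 V} :
    EdgeConflict G s(x, y) e ↔ s(x, y) ≠ e ∧
      ((x ∉ e ∧ y ∉ e ∧ ∃ w ∈ e, G.Adj x w ∨ G.Adj y w) ∨
        ∃ w, G.Adj x y ∧ G.Adj x w ∧ G.Adj y w ∧ (e = s(x, w) ∨ e = s(y, w))) := by
  refine and_congr_right fun hne => or_congr ?_ ⟨?_, ?_⟩
  · simp only [Sym2.mem_iff, exists_eq_or_imp, exists_eq_left]
    grind
  · rintro ⟨p, q, t, hpq, hqt, hpt, h₁, h₂⟩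
    simp only [Set.mem_insert_iff, Set.mem_singleton_iff] at h₁ h₂
    rcases h₁ with h₁ | h₁ | h₁ <;> rcases Sym2.eq_iff.1 h₁ with ⟨rfl, rfl⟩ | ⟨rfl, rfl⟩ <;>
      rcases h₂ with rfl | rfl | rfl <;> simp_all [Sym2.eq_swap, G.adj_comm] <;> grind
  · rintro ⟨w, hxy, hxw, hyw, he⟩
    refine ⟨x, y, w, hxy, hyw, hxw, by simp, ?_⟩
    simp only [Set.mem_insert_iff, Set.mem_singleton_iff]
    tauto

theorem not_edgeConflict_of_not_adj {x y z : V} (hyz : y ≠ z) (h : ¬ G.Adj y z) :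
    ¬ EdgeConflict G s(x, y) s(x, z) := by
  rw [edgeConflict_mk_iff]
  rintro ⟨-, ⟨hx, -⟩ | ⟨w, -, -, hyw, he | he⟩⟩
  · simp at hx
  · obtain rfl | ⟨rfl, rfl⟩ : z = w ∨ x = w ∧ z = x := by simpa using he
    all_goals exact h hyw
  · rcases Sym2.eq_iff.1 he with ⟨rfl, rfl⟩ | ⟨rfl, rfl⟩
    · exact h hyw
    · exact hyz rfl

theorem mem_edgeSet_induce_iff {s : Set V} {e : Sym2 s} :
    e ∈ (G.induce s).edgeSet ↔ e.map (↑) ∈ G.edgeSet := by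
  induction e using Sym2.ind with | _ x y => simp

theorem EdgeConflict.of_map_subtypeVal {s : Set V} {e₁ e₂ : Sym2 s}
    (h : EdgeConflict G (e₁.map (↑)) (e₂.map (↑))) : EdgeConflict (G.induce s) e₁ e₂ := by
  have hinj : Function.Injective (Sym2.map ((↑) : s → V)) :=
    Sym2.map.injective Subtype.val_injective
  induction e₁ using Sym2.ind with | _ x y => ?_
  rw [Sym2.map_mk, edgeConflict_mk_iff] at h
  obtain ⟨hne, ⟨hx, hy, w, hw, hadj⟩ | ⟨w, hxy, hxw, hyw, he⟩⟩ := h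
  · obtain ⟨w', hw', rfl⟩ := Sym2.mem_map.1 hw
    refine edgeConflict_mk_iff.2
      ⟨fun h => hne (by rw [← h, Sym2.map_mk]), .inl ⟨?_, ?_, w', hw', hadj⟩⟩
    · exact fun hx' => hx (Sym2.mem_map.2 ⟨x, hx', rfl⟩)
    · exact fun hy' => hy (Sym2.mem_map.2 ⟨y, hy', rfl⟩)
  · have hw : w ∈ e₂.map (↑) := by rcases he with he | he <;> simp [he]
    obtain ⟨w', -, rfl⟩ := Sym2.mem_map.1 hw
    refine edgeConflict_mk_iff.2
      ⟨fun h => hne (by rw [← h, Sym2.map_mk]), .inr ⟨w', hxy, hxw, hyw, ?_⟩⟩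
    simpa only [← Sym2.map_mk, hinj.eq_iff] using he

theorem IsInjEdgeColoring.ne_of_edgeConflict_map {s : Set V} {k : ℕ} {g : Sym2 s → Fin k}
    (hg : IsInjEdgeColoring (G.induce s) g) {e₁ e₂ : Sym2 s} (he₁ : e₁.map (↑) ∈ G.edgeSet)
    (he₂ : e₂.map (↑) ∈ G.edgeSet) (h : EdgeConflict G (e₁.map (↑)) (e₂.map (↑))) :
    g e₁ ≠ g e₂ :=
  hg e₁ (mem_edgeSet_induce_iff.2 he₁) e₂ (mem_edgeSet_induce_iff.2 he₂) h.of_map_subtypeVal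

variable (G) in
open Classical in
noncomputable def conflictColors [Fintype V] (s : Set V) {k : ℕ} (g : Sym2 s → Fin k)
    (e : Sym2 V) : Finset (Fin k) :=
  ({e' | e'.map (↑) ∈ G.edgeSet ∧ EdgeConflict G e (e'.map (↑))} : Finset (Sym2 s)).image g

theorem mem_conflictColors [Fintype V] {s : Set V} {k : ℕ} {g : Sym2 s → Fin k} {e : Sym2 V}
    {x : Fin k} : x ∈ conflictColors G s g e ↔
      ∃ e' : Sym2 s, e'.map (↑) ∈ G.edgeSet ∧ EdgeConflict G e (e'.map (↑)) ∧ g e' = x := by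
  simp [conflictColors, and_assoc]

theorem IsInjEdgeColoring.extend [Fintype V] {s : Set V} {k : ℕ} {g : Sym2 s → Fin k}
    (hg : IsInjEdgeColoring (G.induce s) g) {h : Sym2 V → Fin k}
    (hold : ∀ e ∈ G.edgeSet, (∃ v ∈ e, v ∉ s) → h e ∉ conflictColors G s g e)
    (hnew : ∀ e₁ ∈ G.edgeSet, ∀ e₂ ∈ G.edgeSet, (∃ v ∈ e₁, v ∉ s) → (∃ v ∈ e₂, v ∉ s) →
      EdgeConflict G e₁ e₂ → h e₁ ≠ h e₂) :
    IsInjEdgeColoring G (Function.extend (Sym2.map (↑)) g h) := by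
  set f := Function.extend (Sym2.map ((↑) : s → V)) g h
  have hinj : Function.Injective (Sym2.map ((↑) : s → V)) :=
    Sym2.map.injective Subtype.val_injective
  have hcases (e : Sym2 V) : (∃ e' : Sym2 s, e'.map (↑) = e) ∨ (∃ v ∈ e, v ∉ s) ∧ f e = h e := by
    by_cases hn : ∃ v ∈ e, v ∉ s
    · refine .inr ⟨hn, Function.extend_apply' _ _ _ ?_⟩
      rintro ⟨e', rfl⟩
      obtain ⟨v, hv, hvs⟩ := hn
      obtain ⟨v', -, rfl⟩ := Sym2.mem_map.1 hv
      exact hvs v'.2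
    · push Not at hn
      exact .inl ⟨e.attachWith hn, Sym2.attachWith_map_subtypeVal hn⟩
  have hnew_old (e : Sym2 V) (he : e ∈ G.edgeSet) (hn : ∃ v ∈ e, v ∉ s) (hfe : f e = h e)
      (e' : Sym2 s) (he' : e'.map (↑) ∈ G.edgeSet) (hc : EdgeConflict G e (e'.map (↑))) :
      f e ≠ f (e'.map (↑)) := by
    rw [hfe, show f (e'.map (↑)) = g e' from hinj.extend_apply _ _ _]
    exact fun heq => hold e he hn (mem_conflictColors.2 ⟨e', he', hc, heq.symm⟩)
  intro e₁ he₁ e₂ he₂ hc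
  rcases hcases e₁ with ⟨e₁, rfl⟩ | ⟨hn₁, hf₁⟩ <;> rcases hcases e₂ with ⟨e₂, rfl⟩ | ⟨hn₂, hf₂⟩
  · simp only [f, hinj.extend_apply]
    exact hg.ne_of_edgeConflict_map he₁ he₂ hc
  · exact (hnew_old _ he₂ hn₂ hf₂ e₁ he₁ hc.symm).symm
  · exact hnew_old _ he₁ hn₁ hf₁ e₂ he₂ hc
  · rw [hf₁, hf₂]
    exact hnew e₁ he₁ e₂ he₂ hn₁ hn₂ hc

theorem card_conflictColors_le [Fintype V] {s : Set V} {k : ℕ} {g : Sym2 s → Fin k}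
    {e₀ : Sym2 V} {T : Finset (Sym2 V)}
    (hT : ∀ e ∈ G.edgeSet, (∀ v ∈ e, v ∈ s) → EdgeConflict G e₀ e → e ∈ T) :
    (conflictColors G s g e₀).card ≤ T.card := by
  classical
  refine Finset.card_image_le.trans (Finset.card_le_card_of_injOn _ (fun e' he' => ?_)
    (Sym2.map.injective Subtype.val_injective).injOn)
  simp only [Finset.coe_filter, Finset.mem_univ, true_and] at he'
  refine hT _ he'.1 (fun v hv => ?_) he'.2
  obtain ⟨v', -, rfl⟩ := Sym2.mem_map.1 hv
  exact v'.2

section Degrees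

variable [Fintype V] [DecidableRel G.Adj] {v : V}

theorem card_neighborFinset_sdiff_add_le [DecidableEq V] {n : ℕ} {X : Finset V}
    (hv : G.degree v ≤ n) (hX : ∀ x ∈ X, G.Adj v x) :
    (G.neighborFinset v \ X).card + X.card ≤ n := by
  rwa [Finset.card_sdiff_add_card_eq_card fun x hx => (G.mem_neighborFinset v x).2 (hX x hx),
    card_neighborFinset_eq_degree]

theorem eq_or_eq_or_eq_of_adj_of_degree_le_three {x y z w : V} (hv : G.degree v ≤ 3)
    (hx : G.Adj v x) (hy : G.Adj v y) (hz : G.Adj v z) (hxy : x ≠ y) (hxz : x ≠ z) (hyz : y ≠ z)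
    (hw : G.Adj v w) : w = x ∨ w = y ∨ w = z := by
  classical
  have h := card_neighborFinset_sdiff_add_le (X := {x, y, z}) hv (by simp [hx, hy, hz])
  rw [Finset.card_eq_three.2 ⟨x, y, z, hxy, hxz, hyz, rfl⟩] at h
  have hN : G.neighborFinset v \ {x, y, z} = ∅ := Finset.card_eq_zero.1 (by omega)
  simpa using Finset.sdiff_eq_empty_iff_subset.1 hN ((G.mem_neighborFinset v w).2 hw)

theorem mem_image_neighborFinset_sdiff [DecidableEq V] {X : Finset V} {e : Sym2 V}
    (he : e ∈ G.edgeSet) (hv : v ∈ e) (hX : ∀ x ∈ X, x ∉ e) :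
    e ∈ (G.neighborFinset v \ X).image (s(v, ·)) := by
  obtain ⟨u, rfl⟩ := Sym2.mem_iff_exists.1 hv
  exact Finset.mem_image.2 ⟨u, Finset.mem_sdiff.2 ⟨(G.mem_neighborFinset v u).2 he,
    fun hu => hX u hu (Sym2.mem_mk_right v u)⟩, rfl⟩

end Degrees

theorem exists_diamond_colors {α : Type*} [Fintype α] [DecidableEq α] (hα : 7 ≤ Fintype.card α)
    {Fab Fad Fcb Fcd Fac : Finset α} (hab : Fab.card ≤ 3) (had : Fad.card ≤ 3) (hcb : Fcb.card ≤ 3)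
    (hcd : Fcd.card ≤ 3) (hac : Fac.card ≤ 2) :
    ∃ x₁ x₂ y₁ y₂ z : α, x₁ ∉ Fab ∧ x₂ ∉ Fad ∧ y₁ ∉ Fcb ∧ y₂ ∉ Fcd ∧ z ∉ Fac ∧
      x₁ ∉ ({y₁, y₂, z} : Set α) ∧ x₂ ∉ ({y₁, y₂, z} : Set α) ∧ z ∉ ({y₁, y₂} : Set α) := by
  have hfree (F : Finset α) (hF : F.card < 7) : ∃ x, x ∉ F := by
    obtain ⟨x, -, hx⟩ := Finset.exists_mem_notMem_of_card_lt_card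
      (hF.trans_le (hα.trans_eq Finset.card_univ.symm))
    exact ⟨x, hx⟩
  obtain ⟨y₁, hy₁⟩ := hfree Fcb (by omega)
  obtain ⟨y₂, hy₂⟩ := hfree Fcd (by omega)
  obtain ⟨z, hz⟩ := hfree ({y₁, y₂} ∪ Fac)
    ((Finset.card_union_le _ _).trans_lt (by have := Finset.card_le_two (a := y₁) (b := y₂); omega))
  have hyz := Finset.card_le_three (a := y₁) (b := y₂) (c := z)
  obtain ⟨x₁, hx₁⟩ := hfree ({y₁, y₂, z} ∪ Fab) ((Finset.card_union_le _ _).trans_lt (by omega))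
  obtain ⟨x₂, hx₂⟩ := hfree ({y₁, y₂, z} ∪ Fad) ((Finset.card_union_le _ _).trans_lt (by omega))
  simp only [Finset.mem_union, Finset.mem_insert, Finset.mem_singleton, not_or] at hz hx₁ hx₂
  simp only [Set.mem_insert_iff, Set.mem_singleton_iff, not_or]
  exact ⟨x₁, x₂, y₁, y₂, z, hx₁.2, hx₂.2, hy₁, hy₂, hz.2, hx₁.1, hx₂.1, hz.1⟩

structure IsDiamond (G : SimpleGraph V) (a b c d : V) : Prop where
  adj_ab : G.Adj a b
  adj_cb : G.Adj c b
  adj_ad : G.Adj a d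
  adj_cd : G.Adj c d
  adj_ac : G.Adj a c
  ne_bd : b ≠ d
  not_adj_bd : ¬ G.Adj b d

def diamondEdges (a b c d : V) : Set (Sym2 V) := {s(a, b), s(a, d), s(c, b), s(c, d), s(a, c)}

namespace IsDiamond

variable {a b c d : V}

theorem swap_tips (hD : IsDiamond G a b c d) : IsDiamond G c b a d :=
  ⟨hD.adj_cb, hD.adj_ab, hD.adj_cd, hD.adj_ad, hD.adj_ac.symm, hD.ne_bd, hD.not_adj_bd⟩

theorem swap_sides (hD : IsDiamond G a b c d) : IsDiamond G a d c b :=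
  ⟨hD.adj_ad, hD.adj_cd, hD.adj_ab, hD.adj_cb, hD.adj_ac, hD.ne_bd.symm,
    fun h => hD.not_adj_bd h.symm⟩

theorem eq_of_adj (hD : IsDiamond G a b c d) [Fintype V] [DecidableRel G.Adj]
    (ha : G.degree a ≤ 3) {w : V} (hw : G.Adj a w) : w = b ∨ w = c ∨ w = d :=
  eq_or_eq_or_eq_of_adj_of_degree_le_three ha hD.adj_ab hD.adj_ac hD.adj_ad hD.adj_cb.ne'
    hD.ne_bd hD.adj_cd.ne hw

theorem ne_of_edgeConflict (hD : IsDiamond G a b c d) {α : Type*} {h : Sym2 V → α}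
    (hab : h s(a, b) ∉ ({h s(c, b), h s(c, d), h s(a, c)} : Set α))
    (had : h s(a, d) ∉ ({h s(c, b), h s(c, d), h s(a, c)} : Set α))
    (hac : h s(a, c) ∉ ({h s(c, b), h s(c, d)} : Set α)) {e e' : Sym2 V}
    (he : e ∈ diamondEdges a b c d) (he' : e' ∈ diamondEdges a b c d) (hc : EdgeConflict G e e') :
    h e ≠ h e' := by
  simp only [diamondEdges, Set.mem_insert_iff, Set.mem_singleton_iff, not_or] at he he' hab had hac
  rcases he with rfl | rfl | rfl | rfl | rfl <;> rcases he' with rfl | rfl | rfl | rfl | rfl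
  all_goals first
    | exact absurd rfl hc.1
    | exact absurd hc (not_edgeConflict_of_not_adj hD.ne_bd hD.not_adj_bd)
    | exact absurd hc (not_edgeConflict_of_not_adj hD.swap_sides.ne_bd hD.swap_sides.not_adj_bd)
    | grind

theorem exists_coloring (hD : IsDiamond G a b c d) {α : Type*} [Fintype α] [DecidableEq α]
    (hα : 7 ≤ Fintype.card α) (F : Sym2 V → Finset α) (hab : (F s(a, b)).card ≤ 3)
    (had : (F s(a, d)).card ≤ 3) (hcb : (F s(c, b)).card ≤ 3) (hcd : (F s(c, d)).card ≤ 3)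
    (hac : (F s(a, c)).card ≤ 2) :
    ∃ h : Sym2 V → α, (∀ e ∈ diamondEdges a b c d, h e ∉ F e) ∧
      ∀ e ∈ diamondEdges a b c d, ∀ e' ∈ diamondEdges a b c d,
        EdgeConflict G e e' → h e ≠ h e' := by
  obtain ⟨x₁, x₂, y₁, y₂, z, hx₁, hx₂, hy₁, hy₂, hz, hx₁y, hx₂y, hzy⟩ :=
    exists_diamond_colors hα hab had hcb hcd hac
  classical
  obtain ⟨h, hab', had', hcb', hcd', hac'⟩ : ∃ h : Sym2 V → α, h s(a, b) = x₁ ∧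
      h s(a, d) = x₂ ∧ h s(c, b) = y₁ ∧ h s(c, d) = y₂ ∧ h s(a, c) = z :=
    ⟨fun e => if a ∈ e then (if b ∈ e then x₁ else if d ∈ e then x₂ else z)
      else if b ∈ e then y₁ else y₂, by
        simp [hD.adj_ab.ne, hD.adj_ab.ne', hD.adj_ac.ne, hD.adj_ad.ne, hD.adj_ad.ne',
          hD.adj_cb.ne', hD.ne_bd, hD.adj_cd.ne']⟩
  refine ⟨h, fun e he => ?_, fun e he e' he' => hD.ne_of_edgeConflict
    (by rwa [hab', hcb', hcd', hac']) (by rwa [had', hcb', hcd', hac']) (by rwa [hac', hcb', hcd'])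
    he he'⟩
  simp only [diamondEdges, Set.mem_insert_iff, Set.mem_singleton_iff] at he
  rcases he with rfl | rfl | rfl | rfl | rfl <;> simpa only [hab', had', hcb', hcd', hac']

variable [Fintype V] [DecidableRel G.Adj]

theorem mem_or_of_edgeConflict_side (hD : IsDiamond G a b c d) (ha : G.degree a ≤ 3)
    {e : Sym2 V} (hae : a ∉ e) (hce : c ∉ e) (h : EdgeConflict G s(a, b) e) :
    d ∈ e ∨ ∃ w ∈ e, G.Adj b w ∧ b ∉ e := by
  obtain ⟨-, ⟨-, hbe, w, hw, haw | hbw⟩ | ⟨w, -, haw, hbw, rfl | rfl⟩⟩ := edgeConflict_mk_iff.1 h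
  · obtain rfl | rfl | rfl := hD.eq_of_adj ha haw
    exacts [absurd hw hbe, absurd hw hce, .inl hw]
  · exact .inr ⟨w, hw, hbw, hbe⟩
  · simp at hae
  · obtain rfl | rfl | rfl := hD.eq_of_adj ha haw
    exacts [absurd hbw (G.loopless.irrefl _), absurd (Sym2.mem_mk_right _ _) hce,
      absurd hbw hD.not_adj_bd]

theorem mem_or_of_edgeConflict_diagonal (hD : IsDiamond G a b c d) (ha : G.degree a ≤ 3)
    (hc : G.degree c ≤ 3) {e : Sym2 V} (hae : a ∉ e) (hce : c ∉ e)
    (h : EdgeConflict G s(a, c) e) : b ∈ e ∨ d ∈ e := by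
  obtain ⟨-, ⟨-, -, w, hw, haw | hcw⟩ | ⟨w, -, -, -, rfl | rfl⟩⟩ := edgeConflict_mk_iff.1 h
  · obtain rfl | rfl | rfl := hD.eq_of_adj ha haw
    exacts [.inl hw, absurd hw hce, .inr hw]
  · obtain rfl | rfl | rfl := hD.swap_tips.eq_of_adj hc hcw
    exacts [.inl hw, absurd hw hae, .inr hw]
  · simp at hae
  · simp at hce

variable {s : Set V} {k : ℕ} {g : Sym2 s → Fin k}

theorem card_conflictColors_side_le (hD : IsDiamond G a b c d) (hsub : ∀ v, G.degree v ≤ 3)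
    (has : a ∉ s) (hcs : c ∉ s) :
    (conflictColors G s g s(a, b)).card ≤ 3 := by
  classical
  have hd := card_neighborFinset_sdiff_add_le (X := {a, c}) (hsub d)
    (by simp [hD.adj_ad.symm, hD.adj_cd.symm])
  have hb := card_neighborFinset_sdiff_add_le (X := {a, c}) (hsub b)
    (by simp [hD.adj_ab.symm, hD.adj_cb.symm])
  have hw (w : V) (hbw : w ∈ G.neighborFinset b \ {a, c}) :
      (G.neighborFinset w \ {b}).card ≤ 2 := by
    have := card_neighborFinset_sdiff_add_le (X := {b}) (hsub w)
      (by simpa [G.adj_comm] using (Finset.mem_sdiff.1 hbw).1)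
    simp only [Finset.card_singleton] at this
    omega
  rw [Finset.card_pair hD.adj_ac.ne] at hd hb
  calc _ ≤ ((G.neighborFinset d \ {a, c}).image (s(d, ·)) ∪ (G.neighborFinset b \ {a, c}).biUnion
        fun w => (G.neighborFinset w \ {b}).image (s(w, ·))).card := by
        refine card_conflictColors_le fun e he hes hc => ?_
        have hae : a ∉ e := fun h => has (hes a h)
        have hce : c ∉ e := fun h => hcs (hes c h)
        have hX : ∀ x ∈ ({a, c} : Finset V), x ∉ e := by simp [hae, hce]
        rcases hD.mem_or_of_edgeConflict_side (hsub a) hae hce hc with hde | ⟨w, hwe, hbw, hbe⟩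
        · exact Finset.mem_union_left _ (mem_image_neighborFinset_sdiff he hde hX)
        · refine Finset.mem_union_right _ (Finset.mem_biUnion.2 ⟨w, ?_,
            mem_image_neighborFinset_sdiff he hwe (by simpa using hbe)⟩)
          simp only [Finset.mem_sdiff, mem_neighborFinset, Finset.mem_insert,
            Finset.mem_singleton, not_or]
          exact ⟨hbw, fun h => hae (h ▸ hwe), fun h => hce (h ▸ hwe)⟩
    _ ≤ 1 + 1 * 2 := by
        refine (Finset.card_union_le _ _).trans (add_le_add ?_ ?_)
        · exact Finset.card_image_le.trans (by omega)
        · exact (Finset.card_biUnion_le_card_mul _ _ 2 fun w hbw =>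
            Finset.card_image_le.trans (hw w hbw)).trans (Nat.mul_le_mul_right 2 (by omega))

theorem card_conflictColors_diagonal_le (hD : IsDiamond G a b c d) (hsub : ∀ v, G.degree v ≤ 3)
    (has : a ∉ s) (hcs : c ∉ s) :
    (conflictColors G s g s(a, c)).card ≤ 2 := by
  classical
  have hd := card_neighborFinset_sdiff_add_le (X := {a, c}) (hsub d)
    (by simp [hD.adj_ad.symm, hD.adj_cd.symm])
  have hb := card_neighborFinset_sdiff_add_le (X := {a, c}) (hsub b)
    (by simp [hD.adj_ab.symm, hD.adj_cb.symm])
  rw [Finset.card_pair hD.adj_ac.ne] at hd hb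
  calc _ ≤ ((G.neighborFinset b \ {a, c}).image (s(b, ·)) ∪
        (G.neighborFinset d \ {a, c}).image (s(d, ·))).card := by
        refine card_conflictColors_le fun e he hes hc => ?_
        have hae : a ∉ e := fun h => has (hes a h)
        have hce : c ∉ e := fun h => hcs (hes c h)
        have hX : ∀ x ∈ ({a, c} : Finset V), x ∉ e := by simp [hae, hce]
        rcases hD.mem_or_of_edgeConflict_diagonal (hsub a) (hsub c) hae hce hc with hbe | hde
        · exact Finset.mem_union_left _ (mem_image_neighborFinset_sdiff he hbe hX)
        · exact Finset.mem_union_right _ (mem_image_neighborFinset_sdiff he hde hX)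
    _ ≤ 1 + 1 := (Finset.card_union_le _ _).trans
        (add_le_add (Finset.card_image_le.trans (by omega)) (Finset.card_image_le.trans (by omega)))

theorem mem_diamondEdges (hD : IsDiamond G a b c d) (ha : G.degree a ≤ 3)
    (hc : G.degree c ≤ 3) {e : Sym2 V} (he : e ∈ G.edgeSet) (hn : a ∈ e ∨ c ∈ e) :
    e ∈ diamondEdges a b c d := by
  rcases hn with hae | hce
  · obtain ⟨w, rfl⟩ := Sym2.mem_iff_exists.1 hae
    obtain rfl | rfl | rfl := hD.eq_of_adj ha he <;> simp [diamondEdges]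
  · obtain ⟨w, rfl⟩ := Sym2.mem_iff_exists.1 hce
    obtain rfl | rfl | rfl := hD.swap_tips.eq_of_adj hc he <;> simp [diamondEdges, Sym2.eq_swap]

end IsDiamond

end

theorem extend_coloring_K4_minus_e_general {V : Type*} [Fintype V] (H : SimpleGraph V)
    [DecidableRel H.Adj] (hsub : ∀ u : V, H.degree u ≤ 3) (a b c d : V)
    (hbd : b ≠ d)
    (e₁ : H.Adj a b) (e₂ : H.Adj b c) (e₃ : H.Adj c d) (e₄ : H.Adj d a) (e₅ : H.Adj a c)
    (hnbd : ¬ H.Adj b d)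
    (hcol : ∃ f : Sym2 (({a, c}ᶜ : Set V)) → Fin 7,
      IsInjEdgeColoring (H.induce ({a, c}ᶜ : Set V)) f) :
    ∃ f : Sym2 V → Fin 7, IsInjEdgeColoring H f := by
  classical
  obtain ⟨g, hg⟩ := hcol
  have hD : IsDiamond H a b c d := ⟨e₁, e₂.symm, e₄.symm, e₃, e₅, hbd, hnbd⟩
  have has : a ∉ ({a, c}ᶜ : Set V) := by simp
  have hcs : c ∉ ({a, c}ᶜ : Set V) := by simp
  obtain ⟨h, hold, hnew⟩ := hD.exists_coloring (by simp) (conflictColors H {a, c}ᶜ g)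
    (hD.card_conflictColors_side_le hsub has hcs)
    (hD.swap_sides.card_conflictColors_side_le hsub has hcs)
    (hD.swap_tips.card_conflictColors_side_le hsub hcs has)
    (hD.swap_tips.swap_sides.card_conflictColors_side_le hsub hcs has)
    (hD.card_conflictColors_diagonal_le hsub has hcs)
  have hmem (e : Sym2 V) (he : e ∈ H.edgeSet) (hn : ∃ v ∈ e, v ∉ ({a, c}ᶜ : Set V)) :
      e ∈ diamondEdges a b c d := by
    obtain ⟨v, hve, hv⟩ := hn
    refine hD.mem_diamondEdges (hsub a) (hsub c) he ?_
    simp only [Set.mem_compl_iff, not_not, Set.mem_insert_iff, Set.mem_singleton_iff] at hv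
    rcases hv with rfl | rfl
    exacts [.inl hve, .inr hve]
  exact ⟨_, hg.extend (fun e he hn => hold e (hmem e he hn))
    fun e he e' he' hn hn' => hnew e (hmem e he hn) e' (hmem e' he' hn')⟩

/-- Deleting the two degree-3 vertices of a copy of `K₄ - e` in a subcubic graph:
if `H - {a,c}` has an injective edge-coloring with 7 colors, so does `H`. -/
theorem extend_coloring_K4_minus_e {V : Type*} [Fintype V] (H : SimpleGraph V)
    [DecidableRel H.Adj] (hsub : ∀ u : V, H.degree u ≤ 3) (a b c d : V)
    (hab : a ≠ b) (hac : a ≠ c) (had : a ≠ d) (hbc : b ≠ c) (hbd : b ≠ d) (hcd : c ≠ d)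
    (e₁ : H.Adj a b) (e₂ : H.Adj b c) (e₃ : H.Adj c d) (e₄ : H.Adj d a) (e₅ : H.Adj a c)
    (hnbd : ¬ H.Adj b d)
    (hcol : ∃ f : Sym2 (({a, c}ᶜ : Set V)) → Fin 7,
      IsInjEdgeColoring (H.induce ({a, c}ᶜ : Set V)) f) :
    ∃ f : Sym2 V → Fin 7, IsInjEdgeColoring H f :=
  extend_coloring_K4_minus_e_general H hsub a b c d hbd e₁ e₂ e₃ e₄ e₅ hnbd hcol
end
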